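/- arXiv:1611.00479 — 3 statements merged into one kernel-verified Lean document; each statement's English description precedes it below -/
import Mathlib

section
/- Let N ≥ 2. For every unitary U on ℂ^N ⊗ ℂ^N, the entangling power satisfies 0 ≤ e_p(U) ≤ (N−1)/(N+1). -/
open Matrix MeasureTheory
open scoped Kronecker

noncomputable section

instance {m n R : Type*} [TopologicalSpace R] : MeasurableSpace (Matrix m n R) := borel _
instance {m n R : Type*} [TopologicalSpace R] : BorelSpace (Matrix m n R) := ⟨rfl⟩

/-- Reshuffling: `(U_R)_{(i,j),(α,β)} = U_{(i,α),(j,β)}`. -/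
def reshuffle (N : ℕ) (U : Matrix (Fin N × Fin N) (Fin N × Fin N) ℂ) :
    Matrix (Fin N × Fin N) (Fin N × Fin N) ℂ :=
  Matrix.of fun p q => U (p.1, q.1) (p.2, q.2)

/-- Partial transpose: `(U_Γ)_{(j,α),(i,β)} = U_{(i,α),(j,β)}`. -/
def ptransp (N : ℕ) (U : Matrix (Fin N × Fin N) (Fin N × Fin N) ℂ) :
    Matrix (Fin N × Fin N) (Fin N × Fin N) ℂ :=
  Matrix.of fun p q => U (q.1, p.2) (p.1, q.2)

/-- The swap gate `S(x ⊗ y) = y ⊗ x`. -/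
def swapGate (N : ℕ) : Matrix (Fin N × Fin N) (Fin N × Fin N) ℂ :=
  Matrix.of fun p q => if p.1 = q.2 ∧ p.2 = q.1 then 1 else 0

/-- `ρ_R(U) = U_R U_R† / N²`. -/
def rhoR (N : ℕ) (U : Matrix (Fin N × Fin N) (Fin N × Fin N) ℂ) :
    Matrix (Fin N × Fin N) (Fin N × Fin N) ℂ :=
  ((N : ℂ) ^ 2)⁻¹ • (reshuffle N U * (reshuffle N U)ᴴ)

/-- `ρ_T(U) = S U_Γ U_Γ† S / N²`. -/
def rhoT (N : ℕ) (U : Matrix (Fin N × Fin N) (Fin N × Fin N) ℂ) :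
    Matrix (Fin N × Fin N) (Fin N × Fin N) ℂ :=
  ((N : ℂ) ^ 2)⁻¹ • (swapGate N * (ptransp N U * (ptransp N U)ᴴ) * swapGate N)

/-- Purity `X(U) = tr(ρ_R(U)²)` (a real number). -/
def Xpur (N : ℕ) (U : Matrix (Fin N × Fin N) (Fin N × Fin N) ℂ) : ℝ :=
  ((rhoR N U * rhoR N U).trace).re

/-- Purity `Y(U) = tr(ρ_T(U)²)` (a real number). -/
def Ypur (N : ℕ) (U : Matrix (Fin N × Fin N) (Fin N × Fin N) ℂ) : ℝ :=
  ((rhoT N U * rhoT N U).trace).re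

/-- Entangling power `e_p(U)`. -/
def ep (N : ℕ) (U : Matrix (Fin N × Fin N) (Fin N × Fin N) ℂ) : ℝ :=
  ((N : ℝ) ^ 2 / ((N : ℝ) + 1) ^ 2) *
    ((1 - Xpur N U) + (1 - Ypur N U) - ((N : ℝ) ^ 2 - 1) / (N : ℝ) ^ 2)

/-- Gate typicality `g_t(U)`. -/
def gateTyp (N : ℕ) (U : Matrix (Fin N × Fin N) (Fin N × Fin N) ℂ) : ℝ :=
  ((N : ℝ) ^ 2 / ((N : ℝ) ^ 2 - 1)) *
    (Ypur N U - Xpur N U + ((N : ℝ) ^ 2 - 1) / (N : ℝ) ^ 2)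

/-- Mean entangling power over the Haar measure, `ē_p = (N-1)²/(N²+1)`. -/
def epBar (N : ℕ) : ℝ := ((N : ℝ) - 1) ^ 2 / ((N : ℝ) ^ 2 + 1)

/-- `iterGate U W k = U · W_{k-1} · U ⋯ W_0 · U`, i.e. `U^(k+1)` with `k` interlacing
local gates `W_0, …, W_{k-1}`. -/
def iterGate {D : Type*} [Fintype D] [DecidableEq D] (U : Matrix D D ℂ)
    (W : ℕ → Matrix D D ℂ) : ℕ → Matrix D D ℂ
  | 0 => U
  | k + 1 => U * W k * iterGate U W k



open Complex
open scoped ComplexConjugate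






noncomputable section

variable {K : Type*} [Fintype K] [DecidableEq K]

def pmat (f : K → K) : Matrix K K ℂ := Matrix.of fun p q => if q = f p then 1 else 0

lemma pmat_mul_apply (f : K → K) (A : Matrix K K ℂ) (p q : K) :
    (pmat f * A) p q = A (f p) q := by
  simp [pmat, Matrix.mul_apply]

lemma mul_pmat_apply (f : K → K) (hf : Function.Involutive f) (A : Matrix K K ℂ) (p q : K) :
    (A * pmat f) p q = A p (f q) := by
  have h : ∀ r : K, (q = f r) = (r = f q) := by
    intro r
    apply propext
    constructor <;> intro h
    · rw [h, hf]
    · rw [h, hf]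
  simp only [pmat, Matrix.mul_apply, Matrix.of_apply, h]
  simp

lemma pmat_mul_pmat (f g : K → K) : pmat f * pmat g = pmat (g ∘ f) := by
  ext p q
  rw [pmat_mul_apply]
  simp [pmat]

lemma pmat_id : pmat (id : K → K) = 1 := by
  ext p q
  simp [pmat, Matrix.one_apply, eq_comm]

lemma pmat_conjTranspose (f : K → K) (hf : Function.Involutive f) : (pmat f)ᴴ = pmat f := by
  ext p q
  have h : (p = f q) = (q = f p) := by
    apply propext
    constructor <;> intro h
    · rw [h, hf]
    · rw [h, hf]
  simp [pmat, Matrix.conjTranspose_apply, h, apply_ite]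

lemma trace_pmat (f : K → K) : (pmat f).trace = ∑ p : K, if p = f p then (1:ℂ) else 0 := by
  simp [Matrix.trace, Matrix.diag, pmat]

-- generic trace expansion lemmas
lemma trace_mul_sum (A B : Matrix K K ℂ) : (A * B).trace = ∑ p : K, ∑ q : K, A p q * B q p := by
  simp [Matrix.trace, Matrix.diag, Matrix.mul_apply]

lemma traceVfVg (V : Matrix K K ℂ) (f g : K → K)
    (hf : Function.Involutive f) (hg : Function.Involutive g) :
    (V * pmat g * Vᴴ * pmat f).trace
      = ∑ p : K, ∑ r : K, V p (g r) * star (V (f p) r) := by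
  have h1 : ∀ p : K, (V * pmat g * Vᴴ * pmat f) p p = (V * pmat g * Vᴴ) p (f p) := fun p =>
    mul_pmat_apply f hf _ p p
  have h2 : ∀ p q : K, (V * pmat g * Vᴴ) p q = ∑ r : K, V p (g r) * star (V q r) := by
    intro p q
    rw [Matrix.mul_apply]
    congr 1
    ext r
    rw [mul_pmat_apply g hg, Matrix.conjTranspose_apply]
  simp only [Matrix.trace, Matrix.diag, h1, h2]

lemma traceBB (A : Matrix K K ℂ) :
    ((A * Aᴴ) * (A * Aᴴ)).trace
      = ∑ w : K × K × K × K,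
          (A w.1 w.2.2.1 * star (A w.2.1 w.2.2.1)) * (A w.2.1 w.2.2.2 * star (A w.1 w.2.2.2)) := by
  have h1 : ∀ p r : K, (A * Aᴴ) p r = ∑ q : K, A p q * star (A r q) := by
    intro p r
    simp [Matrix.mul_apply, Matrix.conjTranspose_apply]
  rw [trace_mul_sum]
  simp only [h1]
  rw [Fintype.sum_prod_type]
  refine Finset.sum_congr rfl fun p _ => ?_
  rw [Fintype.sum_prod_type]
  refine Finset.sum_congr rfl fun r _ => ?_
  rw [Finset.sum_mul_sum, Fintype.sum_prod_type]

lemma trace_mul_self_conjTranspose_re_nonneg (D : Matrix K K ℂ) :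
    0 ≤ ((D * Dᴴ).trace).re := by
  have h : (D * Dᴴ).trace = ∑ p : K, ∑ q : K, (Complex.normSq (D p q) : ℂ) := by
    rw [trace_mul_sum]
    refine Finset.sum_congr rfl fun p _ => Finset.sum_congr rfl fun q _ => ?_
    rw [Matrix.conjTranspose_apply]
    simp [Complex.mul_conj]
  rw [h]
  simp only [Complex.re_sum]
  refine Finset.sum_nonneg fun p _ => Finset.sum_nonneg fun q _ => ?_
  simp [Complex.normSq_nonneg]

end

variable {N : ℕ}

abbrev Idx (N : ℕ) := (Fin N × Fin N) × (Fin N × Fin N)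

def sig : Idx N → Idx N := fun p => ((p.2.1, p.1.2), (p.1.1, p.2.2))
def tau : Idx N → Idx N := fun p => ((p.1.1, p.2.2), (p.2.1, p.1.2))

lemma sig_inv : Function.Involutive (sig (N := N)) := fun p => rfl
lemma tau_inv : Function.Involutive (tau (N := N)) := fun p => rfl
lemma sw_inv : Function.Involutive (Prod.swap : Idx N → Idx N) := fun p => rfl

lemma tau_comp_sig : (tau ∘ sig : Idx N → Idx N) = Prod.swap := rfl
lemma sig_comp_tau : (sig ∘ tau : Idx N → Idx N) = Prod.swap := rfl
lemma sig_comp_sw : (sig ∘ Prod.swap : Idx N → Idx N) = tau := rfl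
lemma sw_comp_sig : (Prod.swap ∘ sig : Idx N → Idx N) = tau := rfl
lemma tau_comp_sw : (tau ∘ Prod.swap : Idx N → Idx N) = sig := rfl
lemma sw_comp_tau : (Prod.swap ∘ tau : Idx N → Idx N) = sig := rfl
lemma sig_comp_sig : (sig ∘ sig : Idx N → Idx N) = id := rfl
lemma tau_comp_tau : (tau ∘ tau : Idx N → Idx N) = id := rfl
lemma sw_comp_sw : (Prod.swap ∘ Prod.swap : Idx N → Idx N) = id := rfl

lemma trace_pmat_sig : (pmat (sig (N := N))).trace = (N : ℂ) ^ 3 := by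
  rw [trace_pmat]
  have h : ∀ p : Idx N, (p = sig p) = (p.2.1 = p.1.1) := by
    rintro ⟨⟨a, b⟩, ⟨c, d⟩⟩
    simp only [sig, Prod.ext_iff]
    apply propext
    constructor
    · rintro ⟨⟨h1, -⟩, -⟩; exact h1.symm
    · intro h1; simp [h1]
  simp only [h]
  simp only [Fintype.sum_prod_type]
  simp [Finset.sum_ite_eq', Finset.sum_const, Finset.card_univ, mul_comm, Fintype.card_prod]
  try simp [apply_ite Finset.card, Finset.sum_ite_eq', Finset.sum_const, Finset.card_univ]
  try push_cast
  try ring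

lemma trace_pmat_tau : (pmat (tau (N := N))).trace = (N : ℂ) ^ 3 := by
  rw [trace_pmat]
  have h : ∀ p : Idx N, (p = tau p) = (p.2.2 = p.1.2) := by
    rintro ⟨⟨a, b⟩, ⟨c, d⟩⟩
    simp only [tau, Prod.ext_iff]
    apply propext
    constructor
    · rintro ⟨⟨-, h1⟩, -⟩; exact h1.symm
    · intro h1; simp [h1]
  simp only [h]
  simp only [Fintype.sum_prod_type]
  simp [Finset.sum_ite_eq', Finset.sum_const, Finset.card_univ, mul_comm, Fintype.card_prod]
  try simp [apply_ite Finset.card, Finset.sum_ite_eq', Finset.sum_const, Finset.card_univ]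
  try push_cast
  try ring

lemma trace_pmat_sw : (pmat (Prod.swap : Idx N → Idx N)).trace = (N : ℂ) ^ 2 := by
  rw [trace_pmat]
  have h : ∀ p : Idx N, (p = Prod.swap p) = (p.2.1 = p.1.1 ∧ p.2.2 = p.1.2) := by
    rintro ⟨⟨a, b⟩, ⟨c, d⟩⟩
    simp only [Prod.swap, Prod.ext_iff]
    apply propext
    constructor
    · rintro ⟨⟨h1, h2⟩, -⟩; exact ⟨h1.symm, h2.symm⟩
    · rintro ⟨h1, h2⟩; simp [h1, h2]
  simp only [h]
  simp only [Fintype.sum_prod_type, ite_and]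
  simp [Finset.sum_ite_eq', Finset.sum_const, Finset.card_univ, mul_comm, Fintype.card_prod]
  try simp [apply_ite Finset.card, Finset.sum_ite_eq', Finset.sum_const, Finset.card_univ]
  try push_cast
  try ring

lemma trace_one_idx : (1 : Matrix (Idx N) (Idx N) ℂ).trace = (N : ℂ) ^ 4 := by
  rw [Matrix.trace_one]
  simp only [Fintype.card_prod, Fintype.card_fin]
  push_cast
  ring

section KeyPart
variable {N : ℕ} (U : Matrix (Fin N × Fin N) (Fin N × Fin N) ℂ)

lemma kron_conjTranspose (A B : Matrix (Fin N × Fin N) (Fin N × Fin N) ℂ) :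
    (A ⊗ₖ B)ᴴ = Aᴴ ⊗ₖ Bᴴ := by
  ext p q
  simp [Matrix.conjTranspose_apply, Matrix.kroneckerMap_apply, star_mul']

lemma kron_unitary (hU : U ∈ Matrix.unitaryGroup (Fin N × Fin N) ℂ) :
    (U ⊗ₖ U) * (U ⊗ₖ U)ᴴ = 1 ∧ (U ⊗ₖ U)ᴴ * (U ⊗ₖ U) = 1 := by
  have h1 : U * Uᴴ = 1 := Matrix.mem_unitaryGroup_iff.mp hU
  have h2 : Uᴴ * U = 1 := Matrix.mem_unitaryGroup_iff'.mp hU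
  constructor
  · rw [kron_conjTranspose, ← Matrix.mul_kronecker_mul, h1, Matrix.one_kronecker_one]
  · rw [kron_conjTranspose, ← Matrix.mul_kronecker_mul, h2, Matrix.one_kronecker_one]

lemma kron_comm_sw : (U ⊗ₖ U) * pmat (Prod.swap : Idx N → Idx N)
    = pmat (Prod.swap : Idx N → Idx N) * (U ⊗ₖ U) := by
  ext p q
  rw [mul_pmat_apply _ sw_inv, pmat_mul_apply]
  simp only [Matrix.kroneckerMap_apply, Prod.fst_swap, Prod.snd_swap]
  ring

-- key identity for X
lemma keyX : ((U ⊗ₖ U) * pmat (sig (N := N)) * (U ⊗ₖ U)ᴴ * pmat (sig (N := N))).trace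
    = ((reshuffle N U * (reshuffle N U)ᴴ) * (reshuffle N U * (reshuffle N U)ᴴ)).trace := by
  rw [traceVfVg _ _ _ sig_inv sig_inv, traceBB]
  calc (∑ p : Idx N, ∑ r : Idx N, (U ⊗ₖ U) p (sig r) * star ((U ⊗ₖ U) (sig p) r))
      = ∑ z : Idx N × Idx N, (U ⊗ₖ U) z.1 (sig z.2) * star ((U ⊗ₖ U) (sig z.1) z.2) := by
        exact (Fintype.sum_prod_type (f := fun z : Idx N × Idx N => (U ⊗ₖ U) z.1 (sig z.2) * star ((U ⊗ₖ U) (sig z.1) z.2))).symm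
    _ = ∑ w : (Fin N × Fin N) × (Fin N × Fin N) × (Fin N × Fin N) × (Fin N × Fin N),
          (reshuffle N U w.1 w.2.2.1 * star (reshuffle N U w.2.1 w.2.2.1)) *
          (reshuffle N U w.2.1 w.2.2.2 * star (reshuffle N U w.1 w.2.2.2)) := by
        apply Fintype.sum_equiv
          (⟨fun z => ((z.1.1.1, z.2.2.1), ((z.1.2.1, z.2.1.1), ((z.1.1.2, z.2.1.2), (z.1.2.2, z.2.2.2)))),
            fun w => (((w.1.1, w.2.2.1.1), (w.2.1.1, w.2.2.2.1)), ((w.2.1.2, w.2.2.1.2), (w.1.2, w.2.2.2.2))),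
            fun z => rfl, fun w => rfl⟩ : (Idx N × Idx N) ≃ ((Fin N × Fin N) × (Fin N × Fin N) × (Fin N × Fin N) × (Fin N × Fin N)))
        intro z
        simp only [Equiv.coe_fn_mk, Matrix.kroneckerMap_apply, sig, reshuffle, Matrix.of_apply,
          star_mul']
        ring

-- key identity for Y
lemma keyY : ((U ⊗ₖ U) * pmat (tau (N := N)) * (U ⊗ₖ U)ᴴ * pmat (sig (N := N))).trace
    = ((ptransp N U * (ptransp N U)ᴴ) * (ptransp N U * (ptransp N U)ᴴ)).trace := by
  rw [traceVfVg _ _ _ sig_inv tau_inv, traceBB]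
  calc (∑ p : Idx N, ∑ r : Idx N, (U ⊗ₖ U) p (tau r) * star ((U ⊗ₖ U) (sig p) r))
      = ∑ z : Idx N × Idx N, (U ⊗ₖ U) z.1 (tau z.2) * star ((U ⊗ₖ U) (sig z.1) z.2) := by
        exact (Fintype.sum_prod_type (f := fun z : Idx N × Idx N => (U ⊗ₖ U) z.1 (tau z.2) * star ((U ⊗ₖ U) (sig z.1) z.2))).symm
    _ = ∑ w : (Fin N × Fin N) × (Fin N × Fin N) × (Fin N × Fin N) × (Fin N × Fin N),
          (ptransp N U w.1 w.2.2.1 * star (ptransp N U w.2.1 w.2.2.1)) *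
          (ptransp N U w.2.1 w.2.2.2 * star (ptransp N U w.1 w.2.2.2)) := by
        apply Fintype.sum_equiv
          (⟨fun z => ((z.2.1.1, z.1.1.2), ((z.2.2.1, z.1.2.2), ((z.1.1.1, z.2.2.2), (z.1.2.1, z.2.1.2)))),
            fun w => (((w.2.2.1.1, w.1.2), (w.2.2.2.1, w.2.1.2)), ((w.1.1, w.2.2.2.2), (w.2.1.1, w.2.2.1.2))),
            fun z => rfl, fun w => rfl⟩ :
            (Idx N × Idx N) ≃ ((Fin N × Fin N) × (Fin N × Fin N) × (Fin N × Fin N) × (Fin N × Fin N)))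
        intro z
        simp only [Equiv.coe_fn_mk, Matrix.kroneckerMap_apply, sig, tau, ptransp, Matrix.of_apply,
          star_mul']
        ring


lemma sum_purity_le (hU : U ∈ Matrix.unitaryGroup (Fin N × Fin N) ℂ) :
    ((((reshuffle N U * (reshuffle N U)ᴴ) * (reshuffle N U * (reshuffle N U)ᴴ)).trace).re)
      + ((((ptransp N U * (ptransp N U)ᴴ) * (ptransp N U * (ptransp N U)ᴴ)).trace).re)
      ≤ (N:ℝ)^4 + (N:ℝ)^2 := by
  classical
  set P : Matrix (Idx N) (Idx N) ℂ := pmat (sig (N := N)) with hPdef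
  set Q : Matrix (Idx N) (Idx N) ℂ := pmat (tau (N := N)) with hQdef
  set W : Matrix (Idx N) (Idx N) ℂ := pmat (Prod.swap : Idx N → Idx N) with hWdef
  set V : Matrix (Idx N) (Idx N) ℂ := U ⊗ₖ U with hVdef
  have hPP : P * P = 1 := by rw [hPdef, pmat_mul_pmat, sig_comp_sig, pmat_id]
  have hQQ : Q * Q = 1 := by rw [hQdef, pmat_mul_pmat, tau_comp_tau, pmat_id]
  have hWW : W * W = 1 := by rw [hWdef, pmat_mul_pmat, sw_comp_sw, pmat_id]
  have hPQ : P * Q = W := by rw [hPdef, hQdef, hWdef, pmat_mul_pmat, tau_comp_sig]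
  have hQP : Q * P = W := by rw [hPdef, hQdef, hWdef, pmat_mul_pmat, sig_comp_tau]
  have hWP : W * P = Q := by rw [hPdef, hQdef, hWdef, pmat_mul_pmat, sig_comp_sw]
  have hPW : P * W = Q := by rw [hPdef, hQdef, hWdef, pmat_mul_pmat, sw_comp_sig]
  have hWQ : W * Q = P := by rw [hPdef, hQdef, hWdef, pmat_mul_pmat, tau_comp_sw]
  have hQW : Q * W = P := by rw [hPdef, hQdef, hWdef, pmat_mul_pmat, sw_comp_tau]
  have hVVh : V * Vᴴ = 1 := (kron_unitary U hU).1
  have hVhV : Vᴴ * V = 1 := (kron_unitary U hU).2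
  have hPH : Pᴴ = P := pmat_conjTranspose _ sig_inv
  have hQH : Qᴴ = Q := pmat_conjTranspose _ tau_inv
  have hVW : V * W = W * V := kron_comm_sw U
  have trP : P.trace = (N:ℂ)^3 := trace_pmat_sig
  have trQ : Q.trace = (N:ℂ)^3 := trace_pmat_tau
  have trW : W.trace = (N:ℂ)^2 := trace_pmat_sw
  -- atomic traces
  have a1 : (V * Vᴴ).trace = (N:ℂ)^4 := by rw [hVVh, trace_one_idx]
  have a2P : (V * (P * Vᴴ)).trace = (N:ℂ)^3 := by
    rw [Matrix.trace_mul_comm, Matrix.mul_assoc, hVhV, Matrix.mul_one, trP]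
  have a2Q : (V * (Q * Vᴴ)).trace = (N:ℂ)^3 := by
    rw [Matrix.trace_mul_comm, Matrix.mul_assoc, hVhV, Matrix.mul_one, trQ]
  have a2W : (V * (W * Vᴴ)).trace = (N:ℂ)^2 := by
    rw [Matrix.trace_mul_comm, Matrix.mul_assoc, hVhV, Matrix.mul_one, trW]
  have a3 : (V * (Vᴴ * P)).trace = (N:ℂ)^3 := by
    rw [← Matrix.mul_assoc, hVVh, Matrix.one_mul, trP]
  set T2 : ℂ := (V * P * Vᴴ * P).trace with hT2
  set T3 : ℂ := (V * Q * Vᴴ * P).trace with hT3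
  have a4 : (V * (P * (Vᴴ * P))).trace = T2 := by rw [hT2]; simp only [Matrix.mul_assoc]
  have a5 : (V * (Q * (Vᴴ * P))).trace = T3 := by rw [hT3]; simp only [Matrix.mul_assoc]
  have a6 : (V * (W * (Vᴴ * P))).trace = (N:ℂ)^3 := by
    rw [← Matrix.mul_assoc, hVW, Matrix.mul_assoc, ← Matrix.mul_assoc V Vᴴ P, hVVh,
      Matrix.one_mul, hWP, trQ]
  -- middle identity
  set Z : Matrix (Idx N) (Idx N) ℂ := 1 + P + Q + W with hZ
  have e1 : (1 + P) * (1 + Q) = Z := by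
    rw [add_mul, one_mul, mul_add, mul_one, hPQ, hZ]; abel
  have e2 : (1 + Q) * (1 + P) = Z := by
    rw [add_mul, one_mul, mul_add, mul_one, hQP, hZ]; abel
  have e3 : Z * Z = Z + Z + Z + Z := by
    rw [hZ]
    simp only [mul_add, add_mul, one_mul, mul_one, hPP, hQQ, hWW, hPQ, hQP, hPW, hWP, hWQ, hQW]
    abel
  have e4 : (1 - P) * (1 - P) = (1 - P) + (1 - P) := by
    simp only [sub_mul, mul_sub, one_mul, mul_one, hPP]
    abel
  set D : Matrix (Idx N) (Idx N) ℂ := (1 - P) * V * ((1 + P) * (1 + Q)) with hD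
  have hDH : Dᴴ = ((1 + Q) * (1 + P)) * (Vᴴ * (1 - P)) := by
    rw [hD]
    simp only [Matrix.conjTranspose_mul, Matrix.conjTranspose_add, Matrix.conjTranspose_sub,
      Matrix.conjTranspose_one, hPH, hQH]
    try simp only [Matrix.mul_assoc]
  have hDD1 : D * Dᴴ = (1 - P) * (V * ((Z + Z + Z + Z) * (Vᴴ * (1 - P)))) := by
    rw [hDH, hD, e1, e2]
    have : 1 - P * V * Z * (Z * (Vᴴ * (1 - P))) = 1 - P * (V * ((Z * Z) * (Vᴴ * (1 - P)))) := by
      simp only [Matrix.mul_assoc]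
    calc (1 - P) * V * Z * (Z * (Vᴴ * (1 - P)))
        = (1 - P) * (V * ((Z * Z) * (Vᴴ * (1 - P)))) := by simp only [Matrix.mul_assoc]
      _ = (1 - P) * (V * ((Z + Z + Z + Z) * (Vᴴ * (1 - P)))) := by rw [e3]
  -- the inner single trace
  have s_val : (V * (Z * (Vᴴ * (1 - P)))).trace
      = ((N:ℂ)^4 + (N:ℂ)^3 + (N:ℂ)^3 + (N:ℂ)^2)
        - ((N:ℂ)^3 + T2 + T3 + (N:ℂ)^3) := by
    have expand : V * (Z * (Vᴴ * (1 - P)))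
        = (V * (Vᴴ) + V * (P * Vᴴ) + V * (Q * Vᴴ) + V * (W * Vᴴ))
          - (V * (Vᴴ * P) + V * (P * (Vᴴ * P)) + V * (Q * (Vᴴ * P)) + V * (W * (Vᴴ * P))) := by
      rw [hZ]
      simp only [Matrix.mul_sub, Matrix.sub_mul, Matrix.mul_add, Matrix.add_mul,
        Matrix.mul_one, Matrix.one_mul, mul_sub, sub_mul, mul_add, add_mul, mul_one, one_mul]
      try abel
    rw [expand, Matrix.trace_sub]
    simp only [Matrix.trace_add]
    rw [a1, a2P, a2Q, a2W, a3, a4, a5, a6]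
  have t_val : ((1 - P) * (V * (Z * (Vᴴ * (1 - P))))).trace
      = 2 * ((((N:ℂ)^4 + (N:ℂ)^3 + (N:ℂ)^3 + (N:ℂ)^2)
        - ((N:ℂ)^3 + T2 + T3 + (N:ℂ)^3))) := by
    rw [Matrix.trace_mul_comm]
    have : V * (Z * (Vᴴ * (1 - P))) * (1 - P) = V * (Z * (Vᴴ * ((1 - P) * (1 - P)))) := by
      simp only [Matrix.mul_assoc]
    rw [this, e4]
    have : Vᴴ * ((1 - P) + (1 - P)) = Vᴴ * (1 - P) + Vᴴ * (1 - P) := by rw [Matrix.mul_add]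
    rw [this, Matrix.mul_add, Matrix.mul_add, Matrix.trace_add, s_val]
    ring
  have key : (D * Dᴴ).trace
      = 8 * ((N:ℂ)^4 + (N:ℂ)^2) - 8 * (T2 + T3) := by
    rw [hDD1]
    have : V * ((Z + Z + Z + Z) * (Vᴴ * (1 - P)))
        = V * (Z * (Vᴴ * (1 - P))) + V * (Z * (Vᴴ * (1 - P)))
          + V * (Z * (Vᴴ * (1 - P))) + V * (Z * (Vᴴ * (1 - P))) := by
      simp only [Matrix.add_mul, Matrix.mul_add]
    rw [this]
    simp only [Matrix.mul_add, Matrix.trace_add]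
    rw [t_val]
    ring
  -- positivity of trace(D Dᴴ)
  have pos : 0 ≤ ((D * Dᴴ).trace).re := trace_mul_self_conjTranspose_re_nonneg D
  rw [key] at pos
  -- identification with the reshuffle/ptransp traces
  have hX : T2 = ((reshuffle N U * (reshuffle N U)ᴴ) * (reshuffle N U * (reshuffle N U)ᴴ)).trace := by
    rw [hT2, hVdef, hPdef]; exact keyX U
  have hY : T3 = ((ptransp N U * (ptransp N U)ᴴ) * (ptransp N U * (ptransp N U)ᴴ)).trace := by
    rw [hT3, hVdef, hQdef, hPdef]; exact keyY U
  have hre : (8 * ((N:ℂ)^4 + (N:ℂ)^2) - 8 * (T2 + T3)).re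
      = 8 * ((N:ℝ)^4 + (N:ℝ)^2) - 8 * (T2.re + T3.re) := by
    simp [Complex.sub_re, Complex.add_re, Complex.mul_re]
    norm_cast
  rw [hre] at pos
  rw [hX, hY] at pos
  linarith


section PL
variable {K : Type*} [Fintype K] [DecidableEq K]
-- generic purity lower bound: (tr B)² ≤ card * tr(B²), B = A Aᴴ
lemma purity_lower (A : Matrix K K ℂ) :
    (((A * Aᴴ).trace).re) ^ 2 ≤ (Fintype.card K : ℝ) * (((A * Aᴴ) * (A * Aᴴ)).trace).re := by
  set B := A * Aᴴ with hB
  have hBH : Bᴴ = B := by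
    rw [hB, Matrix.conjTranspose_mul, Matrix.conjTranspose_conjTranspose]
  have hentry : ∀ p r : K, B r p = star (B p r) := by
    intro p r
    conv_lhs => rw [← hBH]
    rw [Matrix.conjTranspose_apply]
  -- tr(B*B).re = ∑ normSq entries
  have h1 : ((B * B).trace).re = ∑ p : K, ∑ r : K, Complex.normSq (B p r) := by
    have : (B * B).trace = ∑ p : K, ∑ r : K, (Complex.normSq (B p r) : ℂ) := by
      rw [trace_mul_sum]
      refine Finset.sum_congr rfl fun p _ => Finset.sum_congr rfl fun r _ => ?_
      rw [hentry p r]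
      simp [Complex.mul_conj]
    rw [this]
    simp [Complex.re_sum]
  have h2 : ((B).trace).re = ∑ p : K, (B p p).re := by
    simp [Matrix.trace, Matrix.diag, Complex.re_sum]
  rw [h1, h2]
  have step1 : ∑ p : K, ((B p p).re) ^ 2 ≤ ∑ p : K, ∑ r : K, Complex.normSq (B p r) := by
    refine Finset.sum_le_sum fun p _ => ?_
    have : Complex.normSq (B p p) ≤ ∑ r : K, Complex.normSq (B p r) :=
      Finset.single_le_sum (fun r _ => Complex.normSq_nonneg _) (Finset.mem_univ p)
    refine le_trans ?_ this
    rw [Complex.normSq_apply]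
    nlinarith [sq_nonneg ((B p p).im)]
  have step2 : (∑ p : K, (B p p).re) ^ 2 ≤ (Fintype.card K : ℝ) * ∑ p : K, ((B p p).re) ^ 2 := by
    have := sq_sum_le_card_mul_sum_sq (s := (Finset.univ : Finset K)) (f := fun p => (B p p).re)
    simpa using this
  calc (∑ p : K, (B p p).re) ^ 2 ≤ (Fintype.card K : ℝ) * ∑ p : K, ((B p p).re) ^ 2 := step2
    _ ≤ (Fintype.card K : ℝ) * ∑ p : K, ∑ r : K, Complex.normSq (B p r) := by
        apply mul_le_mul_of_nonneg_left step1 (by positivity)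

end PL

lemma trace_AAh (K : Type*) [Fintype K] [DecidableEq K] (A : Matrix K K ℂ) :
    (A * Aᴴ).trace = ∑ p : K, ∑ q : K, A p q * star (A p q) := by
  rw [trace_mul_sum]
  simp [Matrix.conjTranspose_apply]

lemma frob_reshuffle : ((reshuffle N U * (reshuffle N U)ᴴ).trace) = ((U * Uᴴ).trace) := by
  rw [trace_AAh, trace_AAh]
  calc (∑ p : Fin N × Fin N, ∑ q : Fin N × Fin N, reshuffle N U p q * star (reshuffle N U p q))
      = ∑ z : (Fin N × Fin N) × (Fin N × Fin N), reshuffle N U z.1 z.2 * star (reshuffle N U z.1 z.2) := by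
        exact (Fintype.sum_prod_type (f := fun z : (Fin N × Fin N) × (Fin N × Fin N) =>
          reshuffle N U z.1 z.2 * star (reshuffle N U z.1 z.2))).symm
    _ = ∑ z : (Fin N × Fin N) × (Fin N × Fin N), U z.1 z.2 * star (U z.1 z.2) := by
        apply Fintype.sum_equiv
          (⟨fun z => ((z.1.1, z.2.1), (z.1.2, z.2.2)),
            fun z => ((z.1.1, z.2.1), (z.1.2, z.2.2)), fun z => rfl, fun z => rfl⟩ :
            ((Fin N × Fin N) × (Fin N × Fin N)) ≃ ((Fin N × Fin N) × (Fin N × Fin N)))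
        intro z
        rfl
    _ = ∑ p : Fin N × Fin N, ∑ q : Fin N × Fin N, U p q * star (U p q) := by
        exact Fintype.sum_prod_type (f := fun z : (Fin N × Fin N) × (Fin N × Fin N) =>
          U z.1 z.2 * star (U z.1 z.2))

lemma frob_ptransp : ((ptransp N U * (ptransp N U)ᴴ).trace) = ((U * Uᴴ).trace) := by
  rw [trace_AAh, trace_AAh]
  calc (∑ p : Fin N × Fin N, ∑ q : Fin N × Fin N, ptransp N U p q * star (ptransp N U p q))
      = ∑ z : (Fin N × Fin N) × (Fin N × Fin N), ptransp N U z.1 z.2 * star (ptransp N U z.1 z.2) := by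
        exact (Fintype.sum_prod_type (f := fun z : (Fin N × Fin N) × (Fin N × Fin N) =>
          ptransp N U z.1 z.2 * star (ptransp N U z.1 z.2))).symm
    _ = ∑ z : (Fin N × Fin N) × (Fin N × Fin N), U z.1 z.2 * star (U z.1 z.2) := by
        apply Fintype.sum_equiv
          (⟨fun z => ((z.2.1, z.1.2), (z.1.1, z.2.2)),
            fun z => ((z.2.1, z.1.2), (z.1.1, z.2.2)), fun z => rfl, fun z => rfl⟩ :
            ((Fin N × Fin N) × (Fin N × Fin N)) ≃ ((Fin N × Fin N) × (Fin N × Fin N)))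
        intro z
        rfl
    _ = ∑ p : Fin N × Fin N, ∑ q : Fin N × Fin N, U p q * star (U p q) := by
        exact Fintype.sum_prod_type (f := fun z : (Fin N × Fin N) × (Fin N × Fin N) =>
          U z.1 z.2 * star (U z.1 z.2))

lemma Xpur_eq : Xpur N U = ((N:ℝ)^4)⁻¹ *
    (((reshuffle N U * (reshuffle N U)ᴴ) * (reshuffle N U * (reshuffle N U)ᴴ)).trace).re := by
  rw [Xpur, rhoR, Matrix.smul_mul, Matrix.mul_smul, Matrix.trace_smul, Matrix.trace_smul,
    smul_smul]
  have h : (((N:ℂ)^2)⁻¹ * ((N:ℂ)^2)⁻¹) = ((((N:ℝ)^4)⁻¹ : ℝ) : ℂ) := by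
    push_cast
    ring
  rw [h, smul_eq_mul, Complex.re_ofReal_mul]

lemma swapGate_eq_pmat : swapGate N = pmat (Prod.swap : (Fin N × Fin N) → (Fin N × Fin N)) := by
  ext p q
  simp only [swapGate, pmat, Matrix.of_apply, Prod.ext_iff, Prod.fst_swap, Prod.snd_swap]
  congr 1
  apply propext
  constructor
  · rintro ⟨h1, h2⟩; exact ⟨h2.symm, h1.symm⟩
  · rintro ⟨h1, h2⟩; exact ⟨h2.symm, h1.symm⟩

lemma swapGate_mul_self : swapGate N * swapGate N = 1 := by
  rw [swapGate_eq_pmat, pmat_mul_pmat]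
  have : (Prod.swap ∘ Prod.swap : (Fin N × Fin N) → (Fin N × Fin N)) = id := rfl
  rw [this, pmat_id]

lemma Ypur_eq : Ypur N U = ((N:ℝ)^4)⁻¹ *
    (((ptransp N U * (ptransp N U)ᴴ) * (ptransp N U * (ptransp N U)ᴴ)).trace).re := by
  have hSS := swapGate_mul_self (N := N)
  rw [Ypur, rhoT, Matrix.smul_mul, Matrix.mul_smul, Matrix.trace_smul, Matrix.trace_smul,
    smul_smul]
  have hconj : ((swapGate N * (ptransp N U * (ptransp N U)ᴴ) * swapGate N) *
      (swapGate N * (ptransp N U * (ptransp N U)ᴴ) * swapGate N)).trace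
      = ((ptransp N U * (ptransp N U)ᴴ) * (ptransp N U * (ptransp N U)ᴴ)).trace := by
    set A := ptransp N U * (ptransp N U)ᴴ with hA
    have h1 : (swapGate N * A * swapGate N) * (swapGate N * A * swapGate N)
        = swapGate N * (A * (A * swapGate N)) := by
      calc (swapGate N * A * swapGate N) * (swapGate N * A * swapGate N)
          = swapGate N * (A * ((swapGate N * swapGate N) * (A * swapGate N))) := by
            simp only [Matrix.mul_assoc]
        _ = swapGate N * (A * (A * swapGate N)) := by rw [hSS, Matrix.one_mul]
    rw [h1, Matrix.trace_mul_comm]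
    have h2 : (A * (A * swapGate N)) * swapGate N = A * (A * (swapGate N * swapGate N)) := by
      simp only [Matrix.mul_assoc]
    rw [h2, hSS, Matrix.mul_one]
  rw [hconj]
  have h : (((N:ℂ)^2)⁻¹ * ((N:ℂ)^2)⁻¹) = ((((N:ℝ)^4)⁻¹ : ℝ) : ℂ) := by
    push_cast
    ring
  rw [h, smul_eq_mul, Complex.re_ofReal_mul]

lemma trace_UUh (hU : U ∈ Matrix.unitaryGroup (Fin N × Fin N) ℂ) :
    (U * Uᴴ).trace = ((N:ℂ))^2 := by
  have h1 : U * Uᴴ = 1 := Matrix.mem_unitaryGroup_iff.mp hU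
  rw [h1, Matrix.trace_one]
  simp only [Fintype.card_prod, Fintype.card_fin]
  push_cast
  ring

lemma Xtrace_low (hU : U ∈ Matrix.unitaryGroup (Fin N × Fin N) ℂ) (hN : 2 ≤ N) :
    (N:ℝ)^2 ≤ (((reshuffle N U * (reshuffle N U)ᴴ) * (reshuffle N U * (reshuffle N U)ᴴ)).trace).re := by
  have h := purity_lower (reshuffle N U)
  rw [frob_reshuffle, trace_UUh U hU] at h
  have hcard : (Fintype.card (Fin N × Fin N) : ℝ) = (N:ℝ)^2 := by
    simp [Fintype.card_prod]
    ring
  rw [hcard] at h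
  have hre : (((N:ℂ)^2)).re = (N:ℝ)^2 := by norm_cast
  rw [hre] at h
  have hNpos : (0:ℝ) < (N:ℝ)^2 := by
    have h2 : (2:ℝ) ≤ (N:ℝ) := by exact_mod_cast hN
    nlinarith
  nlinarith [h]

lemma Ytrace_low (hU : U ∈ Matrix.unitaryGroup (Fin N × Fin N) ℂ) (hN : 2 ≤ N) :
    (N:ℝ)^2 ≤ (((ptransp N U * (ptransp N U)ᴴ) * (ptransp N U * (ptransp N U)ᴴ)).trace).re := by
  have h := purity_lower (ptransp N U)
  rw [frob_ptransp, trace_UUh U hU] at h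
  have hcard : (Fintype.card (Fin N × Fin N) : ℝ) = (N:ℝ)^2 := by
    simp [Fintype.card_prod]
    ring
  rw [hcard] at h
  have hre : (((N:ℂ)^2)).re = (N:ℝ)^2 := by norm_cast
  rw [hre] at h
  have hNpos : (0:ℝ) < (N:ℝ)^2 := by
    have h2 : (2:ℝ) ≤ (N:ℝ) := by exact_mod_cast hN
    nlinarith
  nlinarith [h]


end KeyPart

/-- For every unitary `U` on `ℂ^N ⊗ ℂ^N`, `0 ≤ e_p(U) ≤ (N-1)/(N+1)`. -/
theorem entangling_power_bounds (N : ℕ) (hN : 2 ≤ N)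
    (U : Matrix (Fin N × Fin N) (Fin N × Fin N) ℂ)
    (hU : U ∈ Matrix.unitaryGroup (Fin N × Fin N) ℂ) :
    0 ≤ ep N U ∧ ep N U ≤ ((N : ℝ) - 1) / ((N : ℝ) + 1) := by
  have hn : (2:ℝ) ≤ (N:ℝ) := by exact_mod_cast hN
  have hn0 : (0:ℝ) < (N:ℝ) := by linarith
  have h2 : (0:ℝ) < (N:ℝ)^2 := by positivity
  have h4 : (0:ℝ) < (N:ℝ)^4 := by positivity
  set a := (((reshuffle N U * (reshuffle N U)ᴴ) * (reshuffle N U * (reshuffle N U)ᴴ)).trace).re with ha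
  set b := (((ptransp N U * (ptransp N U)ᴴ) * (ptransp N U * (ptransp N U)ᴴ)).trace).re with hb
  have hxe : Xpur N U = ((N:ℝ)^4)⁻¹ * a := Xpur_eq U
  have hye : Ypur N U = ((N:ℝ)^4)⁻¹ * b := Ypur_eq U
  have hsum : a + b ≤ (N:ℝ)^4 + (N:ℝ)^2 := sum_purity_le U hU
  have hal : (N:ℝ)^2 ≤ a := Xtrace_low U hU hN
  have hbl : (N:ℝ)^2 ≤ b := Ytrace_low U hU hN
  have hbr : ((1 - Xpur N U) + (1 - Ypur N U) - ((N:ℝ)^2 - 1)/(N:ℝ)^2)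
      = ((N:ℝ)^4 + (N:ℝ)^2 - (a+b))/(N:ℝ)^4 := by
    rw [hxe, hye]
    field_simp
    ring
  constructor
  · rw [ep, hbr]
    apply mul_nonneg
    · positivity
    · apply div_nonneg
      · linarith
      · linarith
  · rw [ep, hbr]
    have hb2 : ((N:ℝ)^4 + (N:ℝ)^2 - (a+b))/(N:ℝ)^4 ≤ ((N:ℝ)^2 - 1)/(N:ℝ)^2 := by
      rw [div_le_div_iff₀ h4 h2]
      nlinarith
    calc (N:ℝ)^2/((N:ℝ)+1)^2 * (((N:ℝ)^4 + (N:ℝ)^2 - (a+b))/(N:ℝ)^4)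
        ≤ (N:ℝ)^2/((N:ℝ)+1)^2 * (((N:ℝ)^2 - 1)/(N:ℝ)^2) := by
          apply mul_le_mul_of_nonneg_left hb2
          positivity
      _ = ((N:ℝ)-1)/((N:ℝ)+1) := by
          rw [div_mul_div_comm, div_eq_div_iff (by positivity) (by positivity)]
          ring
end
end

section
/- Let N ≥ 2 and let U be a unitary on ℂ^N ⊗ ℂ^N. Then 0 ≤ g_t(U) ≤ 2, and g_t(U) = 0 if and only if U is a local gate, i.e., there exist unitaries A, B on ℂ^N such that U = A ⊗ B. -/
open Matrix MeasureTheory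
open scoped Kronecker

noncomputable section

/-!
Both purities are purities of normalized Gram matrices `G = M Mᴴ / N²`, with `M = U_R` for `X`
and `M = U_Γ` for `Y` (conjugating by the swap does not change the purity). Reshuffling and
partial transposition only permute the entries of `U`, so `tr (M Mᴴ) = ‖U‖²_F = N²`. Applying
Cauchy–Schwarz to the rows of `M` gives `|G_pq|² ≤ G_pp G_qq`, hence `1/N² ≤ tr G² ≤ 1`, with
equality on the right exactly when all rows are parallel, i.e. `M` has rank one.

Thus `g_t = N²/(N²-1) · ((Y - 1/N²) + (1 - X))`, where both summands lie in `[0, 1 - 1/N²]`,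
so `0 ≤ g_t ≤ 2`, and `g_t = 0` iff `X = 1` and `Y = 1/N²`. Now `U_R` has rank one iff
`U = A ⊗ B`; unitarity of `A ⊗ B` forces `A Aᴴ = c • 1` and `B Bᴴ = c⁻¹ • 1` with `c > 0`, so
rescaling makes `A`, `B` unitary. Conversely, for unitary `A`, `B` the partial transpose
`Aᵀ ⊗ B` is unitary, so `Y = 1/N²`.
-/

open Finset WithLp
open scoped InnerProductSpace

section GramFamily

variable {𝕜 E ι : Type*} [RCLike 𝕜] [NormedAddCommGroup E] [InnerProductSpace 𝕜 E]

theorem norm_inner_sq_le_norm_sq_mul_norm_sq (x y : E) :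
    ‖⟪x, y⟫_𝕜‖ ^ 2 ≤ ‖x‖ ^ 2 * ‖y‖ ^ 2 := by
  rw [← mul_pow]
  exact pow_le_pow_left₀ (norm_nonneg _) (norm_inner_le_norm x y) 2

variable [Fintype ι] (x : ι → E)

theorem sum_sum_norm_inner_sq_le : ∑ p, ∑ q, ‖⟪x p, x q⟫_𝕜‖ ^ 2 ≤ (∑ p, ‖x p‖ ^ 2) ^ 2 := by
  rw [sq (∑ p, _), sum_mul_sum]
  gcongr with p _ q _
  exact norm_inner_sq_le_norm_sq_mul_norm_sq (x p) (x q)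

theorem sq_sum_norm_sq_le_card_mul :
    (∑ p, ‖x p‖ ^ 2) ^ 2 ≤ Fintype.card ι * ∑ p, ∑ q, ‖⟪x p, x q⟫_𝕜‖ ^ 2 :=
  calc (∑ p, ‖x p‖ ^ 2) ^ 2 ≤ Fintype.card ι * ∑ p, (‖x p‖ ^ 2) ^ 2 :=
        sq_sum_le_card_mul_sum_sq
    _ = Fintype.card ι * ∑ p, ‖⟪x p, x p⟫_𝕜‖ ^ 2 := by
        simp [inner_self_eq_norm_sq_to_K]
    _ ≤ Fintype.card ι * ∑ p, ∑ q, ‖⟪x p, x q⟫_𝕜‖ ^ 2 := by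
        gcongr with p
        exact single_le_sum (f := fun q => ‖⟪x p, x q⟫_𝕜‖ ^ 2) (fun _ _ => by positivity)
          (mem_univ p)

theorem sum_sum_norm_inner_sq_eq_iff :
    ∑ p, ∑ q, ‖⟪x p, x q⟫_𝕜‖ ^ 2 = (∑ p, ‖x p‖ ^ 2) ^ 2 ↔
      ∃ (v : E) (c : ι → 𝕜), ∀ p, x p = c p • v := by
  have hCS := fun p q => norm_inner_sq_le_norm_sq_mul_norm_sq (𝕜 := 𝕜) (x p) (x q)
  rw [sq (∑ p, _), sum_mul_sum, sum_eq_sum_iff_of_le fun p _ => sum_le_sum fun q _ => hCS p q]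
  simp only [mem_univ, forall_const, sum_eq_sum_iff_of_le fun q _ => hCS _ q]
  constructor
  · intro h
    by_cases hzero : ∀ p, x p = 0
    · exact ⟨0, 0, fun p => by simp [hzero p]⟩
    obtain ⟨p₀, hp₀⟩ := not_forall.mp hzero
    have (q : ι) : ∃ r : 𝕜, x q = r • x p₀ := by
      have hq : ‖⟪x p₀, x q⟫_𝕜‖ = ‖x p₀‖ * ‖x q‖ := by
        rw [← pow_left_inj₀ (norm_nonneg _) (by positivity) two_ne_zero, mul_pow]
        exact h p₀ q
      have hparallel := (norm_inner_eq_norm_tfae 𝕜 (x p₀) (x q)).out 0 2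
      exact (hparallel.mp hq).resolve_left hp₀
    choose c hc using this
    exact ⟨x p₀, c, hc⟩
  · rintro ⟨v, c, hc⟩ p q
    simp only [hc, inner_smul_left, inner_smul_right, norm_mul, norm_smul, RCLike.norm_conj,
      inner_self_eq_norm_sq_to_K, norm_pow, RCLike.norm_ofReal, abs_norm]
    ring

end GramFamily

namespace Matrix

section Gram

variable {m n : Type*} [Fintype n] (M : Matrix m n ℂ)

theorem mul_conjTranspose_apply_eq_inner (p q : m) :
    (M * Mᴴ) p q = ⟪toLp 2 (M q), toLp 2 (M p)⟫_ℂ := by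
  simp [EuclideanSpace.inner_toLp_toLp, mul_apply, dotProduct]

variable [Fintype m]

theorem re_trace_mul_conjTranspose_eq_sum_norm_sq :
    (M * Mᴴ).trace.re = ∑ p, ‖toLp 2 (M p)‖ ^ 2 := by
  simp [trace, mul_conjTranspose_apply_eq_inner, inner_self_eq_norm_sq_to_K, ← Complex.ofReal_pow]

theorem re_trace_mul_conjTranspose_eq_sum_sum_norm_sq :
    (M * Mᴴ).trace.re = ∑ p, ∑ q, ‖M p q‖ ^ 2 := by
  simp [re_trace_mul_conjTranspose_eq_sum_norm_sq, EuclideanSpace.norm_sq_eq]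

theorem re_trace_mul_conjTranspose_sq_eq_sum_sum_norm_inner_sq :
    ((M * Mᴴ) * (M * Mᴴ)).trace.re = ∑ p, ∑ q, ‖⟪toLp 2 (M p), toLp 2 (M q)⟫_ℂ‖ ^ 2 := by
  rw [trace, Complex.re_sum]
  refine sum_congr rfl fun p _ => ?_
  rw [diag_apply, mul_apply, Complex.re_sum]
  refine sum_congr rfl fun q _ => ?_
  rw [mul_conjTranspose_apply_eq_inner, mul_conjTranspose_apply_eq_inner, ← inner_conj_symm,
    RCLike.conj_mul]
  norm_cast

theorem re_trace_mul_conjTranspose_sq_le :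
    ((M * Mᴴ) * (M * Mᴴ)).trace.re ≤ (M * Mᴴ).trace.re ^ 2 := by
  rw [re_trace_mul_conjTranspose_sq_eq_sum_sum_norm_inner_sq,
    re_trace_mul_conjTranspose_eq_sum_norm_sq]
  exact sum_sum_norm_inner_sq_le _

theorem sq_re_trace_mul_conjTranspose_le :
    (M * Mᴴ).trace.re ^ 2 ≤ Fintype.card m * ((M * Mᴴ) * (M * Mᴴ)).trace.re := by
  rw [re_trace_mul_conjTranspose_sq_eq_sum_sum_norm_inner_sq,
    re_trace_mul_conjTranspose_eq_sum_norm_sq]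
  exact sq_sum_norm_sq_le_card_mul _

theorem re_trace_mul_conjTranspose_sq_eq_iff :
    ((M * Mᴴ) * (M * Mᴴ)).trace.re = (M * Mᴴ).trace.re ^ 2 ↔ ∃ u w, M = vecMulVec u w := by
  rw [re_trace_mul_conjTranspose_sq_eq_sum_sum_norm_inner_sq,
    re_trace_mul_conjTranspose_eq_sum_norm_sq, sum_sum_norm_inner_sq_eq_iff]
  constructor
  · rintro ⟨v, c, hrows⟩
    exact ⟨c, ofLp v, by ext p k; simpa [vecMulVec_apply] using congrArg (· k) (hrows p)⟩
  · rintro ⟨u, w, rfl⟩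
    exact ⟨toLp 2 w, u, fun p => by ext k; simp [vecMulVec_apply]⟩

end Gram

variable {m n : Type*} [DecidableEq m] [DecidableEq n]

theorem trace_conj_mul_conj [Fintype m] {R : Type*} [CommRing R] {S G H : Matrix m m R}
    (hS : S * S = 1) : ((S * G * S) * (S * H * S)).trace = (G * H).trace := by
  rw [show S * G * S * (S * H * S) = S * (G * (S * S) * H) * S by simp only [Matrix.mul_assoc],
    hS, Matrix.mul_one, trace_mul_cycle, hS, Matrix.one_mul]

theorem exists_eq_smul_one_of_kronecker_eq_one {K : Type*} [Field K] [Nonempty m] [Nonempty n]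
    {P : Matrix m m K} {Q : Matrix n n K} (h : P ⊗ₖ Q = 1) :
    ∃ c : K, c ≠ 0 ∧ P = c • 1 ∧ Q = c⁻¹ • 1 := by
  obtain ⟨i⟩ := ‹Nonempty m›
  obtain ⟨β⟩ := ‹Nonempty n›
  have hentry (i j : m) (α γ : n) :
      P i j * Q α γ = (1 : Matrix (m × n) (m × n) K) (i, α) (j, γ) :=
    congrFun (congrFun h (i, α)) (j, γ)
  have hdiag : P i i * Q β β = 1 := by simpa using hentry i i β β
  have hP : P i i ≠ 0 := left_ne_zero_of_mul_eq_one hdiag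
  refine ⟨P i i, hP, ?_, ?_⟩
  · ext j k
    apply mul_right_cancel₀ (right_ne_zero_of_mul_eq_one hdiag)
    rw [hentry, smul_apply, smul_eq_mul, mul_right_comm, hdiag, one_mul]
    simp [one_apply]
  · ext α γ
    apply mul_left_cancel₀ hP
    rw [hentry, smul_apply, smul_eq_mul, mul_inv_cancel_left₀ hP]
    simp [one_apply]

theorem ofReal_smul_mem_unitaryGroup [Fintype n] {A : Matrix n n ℂ} {r s : ℝ}
    (hs : s ^ 2 * r = 1) (h : A * Aᴴ = (r : ℂ) • 1) : (s : ℂ) • A ∈ unitaryGroup n ℂ := by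
  rw [mem_unitaryGroup_iff, star_eq_conjTranspose, conjTranspose_smul, Matrix.smul_mul,
    Matrix.mul_smul, h, smul_smul, smul_smul, Complex.star_def, Complex.conj_ofReal]
  rw [show (s : ℂ) * s * r = 1 by exact_mod_cast (by rw [← hs]; ring : s * s * r = 1), one_smul]

theorem exists_kronecker_eq_of_kronecker_mem_unitaryGroup [Fintype m] [Fintype n] [Nonempty m]
    [Nonempty n] {A : Matrix m m ℂ} {B : Matrix n n ℂ} (h : A ⊗ₖ B ∈ unitaryGroup (m × n) ℂ) :
    ∃ A' B', A' ∈ unitaryGroup m ℂ ∧ B' ∈ unitaryGroup n ℂ ∧ A ⊗ₖ B = A' ⊗ₖ B' := by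
  have hgram : (A * Aᴴ) ⊗ₖ (B * Bᴴ) = 1 := by
    rw [mul_kronecker_mul, ← conjTranspose_kronecker, ← star_eq_conjTranspose]
    exact mem_unitaryGroup_iff.mp h
  obtain ⟨c, hc, hA, hB⟩ := exists_eq_smul_one_of_kronecker_eq_one hgram
  obtain ⟨i⟩ := ‹Nonempty m›
  have hcr : c = ((‖toLp 2 (A i)‖ ^ 2 : ℝ) : ℂ) := by
    simpa [mul_conjTranspose_apply_eq_inner, inner_self_eq_norm_sq_to_K] using
      (congrFun (congrFun hA i) i).symm
  set r := ‖toLp 2 (A i)‖ ^ 2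
  have hr : 0 < r := lt_of_le_of_ne (by positivity) (by exact_mod_cast (hcr ▸ hc).symm)
  refine ⟨(((√r)⁻¹ : ℝ) : ℂ) • A, ((√r : ℝ) : ℂ) • B, ofReal_smul_mem_unitaryGroup ?_ (hcr ▸ hA),
    ofReal_smul_mem_unitaryGroup (r := r⁻¹) ?_ (by rw [hB, hcr]; push_cast; rfl), ?_⟩
  · rw [inv_pow, Real.sq_sqrt hr.le, inv_mul_cancel₀ hr.ne']
  · rw [Real.sq_sqrt hr.le, mul_inv_cancel₀ hr.ne']
  · rw [smul_kronecker, kronecker_smul, smul_smul, ← Complex.ofReal_mul,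
      inv_mul_cancel₀ (Real.sqrt_pos.mpr hr).ne', Complex.ofReal_one, one_smul]

end Matrix

theorem swapGate_mul_swapGate (N : ℕ) : swapGate N * swapGate N = 1 := by
  ext ⟨a, b⟩ ⟨c, d⟩
  simp only [Matrix.mul_apply, swapGate, Matrix.of_apply, Matrix.one_apply,
    Fintype.sum_prod_type, Prod.mk.injEq, ite_and]
  rw [Finset.sum_comm]
  simp [Finset.sum_ite_eq, eq_comm]

section Purity

variable {N : ℕ}

theorem re_inv_sq_mul_inv_sq_mul (z : ℂ) :
    (((N : ℂ) ^ 2)⁻¹ * ((N : ℂ) ^ 2)⁻¹ * z).re = z.re / N ^ 4 := by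
  rw [show ((N : ℂ) ^ 2)⁻¹ * ((N : ℂ) ^ 2)⁻¹ = ((1 / (N : ℝ) ^ 4 : ℝ) : ℂ) by push_cast; ring,
    Complex.re_ofReal_mul]
  ring

theorem Xpur_eq_s11 (U : Matrix (Fin N × Fin N) (Fin N × Fin N) ℂ) :
    Xpur N U =
      ((reshuffle N U * (reshuffle N U)ᴴ) * (reshuffle N U * (reshuffle N U)ᴴ)).trace.re /
        N ^ 4 := by
  rw [Xpur, rhoR, Matrix.smul_mul, Matrix.mul_smul, smul_smul, trace_smul, smul_eq_mul,
    re_inv_sq_mul_inv_sq_mul]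

theorem Ypur_eq_s11 (U : Matrix (Fin N × Fin N) (Fin N × Fin N) ℂ) :
    Ypur N U =
      ((ptransp N U * (ptransp N U)ᴴ) * (ptransp N U * (ptransp N U)ᴴ)).trace.re / N ^ 4 := by
  rw [Ypur, rhoT, Matrix.smul_mul, Matrix.mul_smul, smul_smul, trace_smul, smul_eq_mul,
    trace_conj_mul_conj (swapGate_mul_swapGate N), re_inv_sq_mul_inv_sq_mul]

theorem re_trace_reshuffle_mul_conjTranspose (U : Matrix (Fin N × Fin N) (Fin N × Fin N) ℂ) :
    (reshuffle N U * (reshuffle N U)ᴴ).trace.re = (U * Uᴴ).trace.re := by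
  simp only [re_trace_mul_conjTranspose_eq_sum_sum_norm_sq, reshuffle, of_apply,
    Fintype.sum_prod_type]
  exact sum_congr rfl fun i _ => sum_comm

theorem re_trace_ptransp_mul_conjTranspose (U : Matrix (Fin N × Fin N) (Fin N × Fin N) ℂ) :
    (ptransp N U * (ptransp N U)ᴴ).trace.re = (U * Uᴴ).trace.re := by
  simp only [re_trace_mul_conjTranspose_eq_sum_sum_norm_sq, ptransp, of_apply,
    Fintype.sum_prod_type]
  refine (sum_congr rfl fun p₁ _ => sum_comm).trans (sum_comm.trans ?_)
  exact sum_congr rfl fun q₁ _ => sum_comm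

theorem re_trace_mul_conjTranspose_eq_sq_of_mem_unitaryGroup
    {U : Matrix (Fin N × Fin N) (Fin N × Fin N) ℂ} (hU : U ∈ unitaryGroup (Fin N × Fin N) ℂ) :
    (U * Uᴴ).trace.re = N ^ 2 := by
  rw [← star_eq_conjTranspose, mem_unitaryGroup_iff.mp hU, trace_one]
  simp [sq]

theorem re_trace_mul_conjTranspose_sq_div_mem_Icc {n : Type*} [Fintype n]
    {M : Matrix (Fin N × Fin N) n ℂ} (hM : (M * Mᴴ).trace.re = N ^ 2) :
    ((M * Mᴴ) * (M * Mᴴ)).trace.re / N ^ 4 ∈ Set.Icc (1 / (N : ℝ) ^ 2) 1 := by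
  have hupper := re_trace_mul_conjTranspose_sq_le M
  have hlower := sq_re_trace_mul_conjTranspose_le M
  simp only [hM, Fintype.card_prod, Fintype.card_fin, Nat.cast_mul] at hupper hlower
  rcases N.eq_zero_or_pos with rfl | hN
  · simp
  have hN2 : (0 : ℝ) < N ^ 2 := by positivity
  constructor
  · rw [div_le_div_iff₀ hN2 (by positivity)]
    nlinarith
  · rw [div_le_one (by positivity)]
    linarith

variable {U : Matrix (Fin N × Fin N) (Fin N × Fin N) ℂ}

theorem Xpur_mem_Icc (hU : U ∈ unitaryGroup (Fin N × Fin N) ℂ) :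
    Xpur N U ∈ Set.Icc (1 / (N : ℝ) ^ 2) 1 := by
  rw [Xpur_eq_s11]
  apply re_trace_mul_conjTranspose_sq_div_mem_Icc
  rw [re_trace_reshuffle_mul_conjTranspose,
    re_trace_mul_conjTranspose_eq_sq_of_mem_unitaryGroup hU]

theorem Ypur_mem_Icc (hU : U ∈ unitaryGroup (Fin N × Fin N) ℂ) :
    Ypur N U ∈ Set.Icc (1 / (N : ℝ) ^ 2) 1 := by
  rw [Ypur_eq_s11]
  apply re_trace_mul_conjTranspose_sq_div_mem_Icc
  rw [re_trace_ptransp_mul_conjTranspose,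
    re_trace_mul_conjTranspose_eq_sq_of_mem_unitaryGroup hU]

end Purity

section GateTypicality

variable {N : ℕ}

theorem gateTyp_eq_mul_add (hN : N ≠ 0) (U : Matrix (Fin N × Fin N) (Fin N × Fin N) ℂ) :
    gateTyp N U = N ^ 2 / (N ^ 2 - 1) * ((Ypur N U - 1 / N ^ 2) + (1 - Xpur N U)) := by
  rw [gateTyp]
  congr 1
  field_simp
  ring

variable {U : Matrix (Fin N × Fin N) (Fin N × Fin N) ℂ}

theorem gateTyp_mem_Icc (hN : 2 ≤ N) (hU : U ∈ unitaryGroup (Fin N × Fin N) ℂ) :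
    gateTyp N U ∈ Set.Icc 0 2 := by
  obtain ⟨hX₁, hX₂⟩ := Xpur_mem_Icc hU
  obtain ⟨hY₁, hY₂⟩ := Ypur_mem_Icc hU
  have hN2 : (4 : ℝ) ≤ N ^ 2 := by
    have : (2 : ℝ) ≤ N := by exact_mod_cast hN
    nlinarith
  rw [gateTyp_eq_mul_add (by omega)]
  constructor
  · exact mul_nonneg (div_nonneg (by positivity) (by linarith)) (by linarith)
  · rw [div_mul_eq_mul_div, div_le_iff₀ (by linarith)]
    have : (N : ℝ) ^ 2 * (1 / N ^ 2) = 1 := by field_simp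
    nlinarith

theorem gateTyp_eq_zero_iff (hN : 2 ≤ N) (hU : U ∈ unitaryGroup (Fin N × Fin N) ℂ) :
    gateTyp N U = 0 ↔ Xpur N U = 1 ∧ Ypur N U = 1 / N ^ 2 := by
  obtain ⟨hX₁, hX₂⟩ := Xpur_mem_Icc hU
  obtain ⟨hY₁, hY₂⟩ := Ypur_mem_Icc hU
  have hN2 : (1 : ℝ) < N ^ 2 := by
    have : (2 : ℝ) ≤ N := by exact_mod_cast hN
    nlinarith
  rw [gateTyp_eq_mul_add (by omega), mul_eq_zero, div_eq_zero_iff]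
  constructor
  · rintro ((h | h) | h)
    · linarith
    · linarith
    · constructor <;> linarith
  · rintro ⟨hX, hY⟩
    right
    linarith

end GateTypicality

section LocalGates

variable {N : ℕ}

theorem exists_reshuffle_eq_vecMulVec_iff (U : Matrix (Fin N × Fin N) (Fin N × Fin N) ℂ) :
    (∃ u w, reshuffle N U = vecMulVec u w) ↔ ∃ A B : Matrix (Fin N) (Fin N) ℂ, U = A ⊗ₖ B := by
  constructor
  · rintro ⟨u, w, h⟩
    refine ⟨of fun i j => u (i, j), of fun α β => w (α, β), ?_⟩
    ext ⟨i, α⟩ ⟨j, β⟩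
    simpa [reshuffle, vecMulVec_apply] using congrFun (congrFun h (i, j)) (α, β)
  · rintro ⟨A, B, rfl⟩
    exact ⟨fun p => A p.1 p.2, fun q => B q.1 q.2, by ext; simp [reshuffle, vecMulVec_apply]⟩

theorem Xpur_eq_one_iff (hN : N ≠ 0) {U : Matrix (Fin N × Fin N) (Fin N × Fin N) ℂ}
    (hU : U ∈ unitaryGroup (Fin N × Fin N) ℂ) :
    Xpur N U = 1 ↔ ∃ A B : Matrix (Fin N) (Fin N) ℂ, U = A ⊗ₖ B := by
  rw [Xpur_eq_s11, div_eq_one_iff_eq (pow_ne_zero 4 (Nat.cast_ne_zero.mpr hN)),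
    ← exists_reshuffle_eq_vecMulVec_iff, ← re_trace_mul_conjTranspose_sq_eq_iff,
    re_trace_reshuffle_mul_conjTranspose, re_trace_mul_conjTranspose_eq_sq_of_mem_unitaryGroup hU]
  ring_nf

theorem ptransp_kronecker (A B : Matrix (Fin N) (Fin N) ℂ) : ptransp N (A ⊗ₖ B) = Aᵀ ⊗ₖ B := by
  ext
  simp [ptransp]

theorem Ypur_kronecker {A B : Matrix (Fin N) (Fin N) ℂ} (hA : A ∈ unitaryGroup (Fin N) ℂ)
    (hB : B ∈ unitaryGroup (Fin N) ℂ) : Ypur N (A ⊗ₖ B) = 1 / N ^ 2 := by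
  have hunitary : Aᵀ ⊗ₖ B ∈ unitaryGroup (Fin N × Fin N) ℂ :=
    kronecker_mem_unitary (transpose_mem_unitaryGroup_iff.mpr hA) hB
  rw [Ypur_eq_s11, ptransp_kronecker, ← star_eq_conjTranspose, mem_unitaryGroup_iff.mp hunitary,
    Matrix.one_mul, trace_one]
  rcases eq_or_ne (N : ℝ) 0 with hN | hN
  · simp [hN]
  · simp only [Fintype.card_prod, Fintype.card_fin, Nat.cast_mul]
    field_simp
    norm_cast

end LocalGates

/-- For a unitary `U` on `ℂ^N ⊗ ℂ^N`, `0 ≤ g_t(U) ≤ 2`, and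
`g_t(U) = 0` iff `U` is a local gate `A ⊗ B`. -/
theorem gate_typicality_bounds_and_zero_iff_local (N : ℕ) (hN : 2 ≤ N)
    (U : Matrix (Fin N × Fin N) (Fin N × Fin N) ℂ)
    (hU : U ∈ Matrix.unitaryGroup (Fin N × Fin N) ℂ) :
    (0 ≤ gateTyp N U ∧ gateTyp N U ≤ 2) ∧
      (gateTyp N U = 0 ↔
        ∃ A B : Matrix (Fin N) (Fin N) ℂ,
          A ∈ Matrix.unitaryGroup (Fin N) ℂ ∧ B ∈ Matrix.unitaryGroup (Fin N) ℂ ∧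
            U = A ⊗ₖ B) := by
  have : NeZero N := ⟨by omega⟩
  refine ⟨gateTyp_mem_Icc hN hU, ?_⟩
  rw [gateTyp_eq_zero_iff hN hU]
  constructor
  · rintro ⟨hX, -⟩
    obtain ⟨A, B, rfl⟩ := (Xpur_eq_one_iff (by omega) hU).mp hX
    exact exists_kronecker_eq_of_kronecker_mem_unitaryGroup hU
  · rintro ⟨A, B, hA, hB, rfl⟩
    exact ⟨(Xpur_eq_one_iff (by omega) hU).mpr ⟨A, B, rfl⟩, Ypur_kronecker hA hB⟩
end
end

section
/- Let N ≥ 2 and let U_d be the random diagonal unitary on ℂ^N ⊗ ℂ^N whose N² diagonal entries are e^{iθ_k} with θ_1, …, θ_{N²} independent and uniformly distributed on [0, 2π). Then the expectation of the purity X(U_d) = tr(ρ_R(U_d)²) over the random phases equals (2N−1)/N². -/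
open Matrix MeasureTheory
open scoped Kronecker

noncomputable section

/-- The uniform probability measure on `[0, 2π)`. -/
def uniformPhase : Measure ℝ :=
  (ENNReal.ofReal (2 * Real.pi))⁻¹ • volume.restrict (Set.Ico 0 (2 * Real.pi))

/-! For a diagonal `U` with entries `u (i, α)`, the reshuffle `U_R` is the `N × N` matrix
`V = (u (i, α))` transported by the isometry `|k⟩ ↦ |k⟩ ⊗ |k⟩`, so
`tr ρ_R² = N⁻⁴ tr (V V†)² = N⁻⁴ ∑ u_{iα} ū_{kα} u_{kβ} ū_{iβ}`. With `u = e^{iθ}` each summand is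
`e^{i(θ_{iα} - θ_{kα} + θ_{kβ} - θ_{iβ})}`; under independent uniform phases its expectation is `1`
when this combination of phases cancels identically, i.e. when `i = k` or `α = β`, and `0`
otherwise. There are `2N³ - N²` such quadruples. -/

open Complex

instance : IsProbabilityMeasure uniformPhase := by
  constructor
  simp only [uniformPhase, Measure.smul_apply, Measure.restrict_apply_univ, Real.volume_Ico,
    sub_zero, smul_eq_mul]
  exact ENNReal.inv_mul_cancel (by simp [Real.pi_pos]) ENNReal.ofReal_ne_top

theorem integral_exp_I_mul_intCast_mul_uniformPhase (n : ℤ) :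
    ∫ x, exp (I * (n * x)) ∂uniformPhase = if n = 0 then 1 else 0 := by
  split_ifs with hn
  · simp [hn]
  have h2π : (0 : ℝ) ≤ 2 * Real.pi := by positivity
  have hc : I * n ≠ 0 := by simp [hn]
  rw [uniformPhase, integral_smul_measure, integral_Ico_eq_integral_Ioo,
    ← integral_Ioc_eq_integral_Ioo, ← intervalIntegral.integral_of_le h2π]
  simp_rw [← mul_assoc]
  rw [integral_exp_mul_complex hc]
  have : I * n * ((2 * Real.pi : ℝ) : ℂ) = n * (2 * Real.pi * I) := by push_cast; ring
  rw [this, exp_int_mul_two_pi_mul_I]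
  simp

theorem integral_exp_I_mul_sum_pi_uniformPhase {ι : Type*} [Fintype ι] (n : ι → ℤ) :
    ∫ θ : ι → ℝ, exp (I * ∑ p, (n p : ℂ) * (θ p : ℂ)) ∂(Measure.pi fun _ => uniformPhase)
      = if n = 0 then 1 else 0 := by
  simp_rw [Finset.mul_sum, exp_sum]
  rw [integral_fintype_prod_eq_prod fun p (x : ℝ) => exp (I * (n p * x))]
  simp_rw [integral_exp_I_mul_intCast_mul_uniformPhase]
  rw [Finset.prod_ite_zero]
  simp [funext_iff]

theorem integrable_exp_I_mul_ofReal {α : Type*} [MeasurableSpace α] {μ : Measure α}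
    [IsFiniteMeasure μ] {f : α → ℝ} (hf : Measurable f) :
    Integrable (fun x => exp (I * f x)) μ :=
  Integrable.of_bound (by fun_prop) 1 (ae_of_all _ fun x => (norm_exp_I_mul_ofReal (f x)).le)

section Plaquette

variable {m n : Type*}

def plaquette (θ : m × n → ℝ) (i k : m) (a b : n) : ℝ :=
  θ (i, a) - θ (k, a) + θ (k, b) - θ (i, b)

theorem integrable_exp_I_mul_plaquette [Fintype m] [Fintype n] (i k : m) (a b : n) :
    Integrable (fun θ => exp (I * plaquette θ i k a b)) (Measure.pi fun _ => uniformPhase) :=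
  integrable_exp_I_mul_ofReal (by unfold plaquette; fun_prop)

theorem integral_exp_I_mul_plaquette [Fintype m] [Fintype n] [DecidableEq m] [DecidableEq n]
    (i k : m) (a b : n) :
    ∫ θ, exp (I * plaquette θ i k a b) ∂(Measure.pi fun _ => uniformPhase)
      = if i = k ∨ a = b then 1 else 0 := by
  set c : m × n → ℤ :=
    Pi.single (i, a) 1 - Pi.single (k, a) 1 + Pi.single (k, b) 1 - Pi.single (i, b) 1
  have hsum (θ : m × n → ℝ) : ∑ p, (c p : ℂ) * θ p = plaquette θ i k a b := by
    simp [plaquette, c, Pi.single_apply, sub_mul, add_mul, Finset.sum_add_distrib,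
      Finset.sum_sub_distrib]
  have hc : c = 0 ↔ i = k ∨ a = b := by
    constructor
    · intro h
      by_contra! hik
      have := congrFun h (i, a)
      simp [c, hik.1, hik.2] at this
    · rintro (rfl | rfl) <;> simp [c]
  simp_rw [← hsum, integral_exp_I_mul_sum_pi_uniformPhase, hc]

theorem sum_ite_eq_or_eq [Fintype m] [Fintype n] [DecidableEq m] [DecidableEq n]
    {R : Type*} [CommRing R] :
    ∑ i : m, ∑ k : m, ∑ a : n, ∑ b : n, (if i = k ∨ a = b then 1 else 0 : R)
      = Fintype.card m * Fintype.card n ^ 2 + Fintype.card m ^ 2 * Fintype.card n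
        - Fintype.card m * Fintype.card n := by
  have hor (i k : m) (a b : n) : (if i = k ∨ a = b then 1 else 0 : R)
      = (if i = k then 1 else 0) + (if a = b then 1 else 0)
        - (if i = k then 1 else 0) * (if a = b then 1 else 0) := by
    split_ifs <;> simp_all
  simp only [hor, mul_ite, mul_one, mul_zero, Finset.sum_sub_distrib, Finset.sum_add_distrib,
    Finset.sum_ite_irrel, Finset.sum_const, Finset.card_univ, nsmul_eq_mul,
    Finset.sum_ite_eq, Finset.mem_univ, ↓reduceIte]
  ring

theorem integrable_sum_exp_I_mul_plaquette [Fintype m] [Fintype n] :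
    Integrable (fun θ => ∑ i : m, ∑ k : m, ∑ a : n, ∑ b : n, exp (I * plaquette θ i k a b))
      (Measure.pi fun _ => uniformPhase) :=
  integrable_finsetSum _ fun i _ => integrable_finsetSum _ fun k _ =>
    integrable_finsetSum _ fun a _ => integrable_finsetSum _ fun b _ =>
      integrable_exp_I_mul_plaquette i k a b

theorem integral_sum_exp_I_mul_plaquette [Fintype m] [Fintype n] [DecidableEq m]
    [DecidableEq n] :
    ∫ θ, ∑ i : m, ∑ k : m, ∑ a : n, ∑ b : n, exp (I * plaquette θ i k a b)
        ∂(Measure.pi fun _ => uniformPhase)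
      = Fintype.card m * Fintype.card n ^ 2 + Fintype.card m ^ 2 * Fintype.card n
        - Fintype.card m * Fintype.card n := by
  simp (disch := repeat (first | exact integrable_exp_I_mul_plaquette _ _ _ _ | intro _ _ |
    apply integrable_finsetSum)) only [integral_finsetSum]
  simp_rw [integral_exp_I_mul_plaquette, sum_ite_eq_or_eq]

end Plaquette

section Isometry

variable {m n R : Type*} [Fintype n] [DecidableEq n]

def copyIsometry (n R : Type*) [DecidableEq n] [Zero R] [One R] : Matrix (n × n) n R :=
  of fun p k => if p = (k, k) then 1 else 0

theorem copyIsometry_conjTranspose_mul_self [Semiring R] [StarRing R] :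
    (copyIsometry n R)ᴴ * copyIsometry n R = 1 := by
  ext k l
  simp [copyIsometry, mul_apply, one_apply, eq_comm, apply_ite star]

theorem conj_isometry_mul_conj_isometry [Fintype m] [Semiring R] [StarRing R]
    {E : Matrix m n R} (hE : Eᴴ * E = 1) (A B : Matrix n n R) :
    E * A * Eᴴ * (E * B * Eᴴ) = E * (A * B) * Eᴴ := by
  simp only [Matrix.mul_assoc]
  rw [← Matrix.mul_assoc Eᴴ, hE, Matrix.one_mul]

theorem trace_conj_isometry [Fintype m] [CommSemiring R] [StarRing R]
    {E : Matrix m n R} (hE : Eᴴ * E = 1) (A : Matrix n n R) :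
    (E * A * Eᴴ).trace = A.trace := by
  rw [trace_mul_comm, ← Matrix.mul_assoc, hE, Matrix.one_mul]

end Isometry

theorem trace_mul_conjTranspose_sq {m n R : Type*} [Fintype m] [Fintype n] [CommSemiring R]
    [StarRing R] (V : Matrix m n R) :
    (V * Vᴴ * (V * Vᴴ)).trace
      = ∑ i, ∑ k, ∑ a, ∑ b, V i a * star (V k a) * (V k b * star (V i b)) := by
  simp only [trace, diag_apply, mul_apply, conjTranspose_apply, Finset.sum_mul, Finset.mul_sum]
  exact Finset.sum_congr rfl fun i _ => Finset.sum_congr rfl fun k _ => Finset.sum_comm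

theorem reshuffle_diagonal {N : ℕ} (u : Fin N × Fin N → ℂ) :
    reshuffle N (diagonal u)
      = copyIsometry (Fin N) ℂ * of (Function.curry u) * (copyIsometry (Fin N) ℂ)ᴴ := by
  ext ⟨i, j⟩ ⟨α, β⟩
  simp only [reshuffle, diagonal_apply, Prod.mk.injEq, ite_and, of_apply, copyIsometry,
    mul_apply, Function.curry_apply, ite_mul, one_mul, zero_mul, Finset.sum_ite_eq,
    Finset.mem_univ, ↓reduceIte, conjTranspose_apply, RCLike.star_def, apply_ite (starRingEnd ℂ),
    map_one, map_zero, mul_ite, mul_one, mul_zero]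
  grind

theorem trace_rhoR_mul_rhoR_diagonal {N : ℕ} (u : Fin N × Fin N → ℂ) :
    (rhoR N (diagonal u) * rhoR N (diagonal u)).trace
      = ((N : ℂ) ^ 2)⁻¹ ^ 2 * ∑ i, ∑ k, ∑ a, ∑ b,
          u (i, a) * star (u (k, a)) * (u (k, b) * star (u (i, b))) := by
  set E := copyIsometry (Fin N) ℂ
  set V := of (Function.curry u)
  have hE : Eᴴ * E = 1 := copyIsometry_conjTranspose_mul_self
  have hR : (E * V * Eᴴ)ᴴ = E * Vᴴ * Eᴴ := by
    simp only [conjTranspose_mul, conjTranspose_conjTranspose, Matrix.mul_assoc]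
  rw [rhoR, reshuffle_diagonal, smul_mul_smul_comm, trace_smul, hR,
    conj_isometry_mul_conj_isometry hE, conj_isometry_mul_conj_isometry hE,
    trace_conj_isometry hE, trace_mul_conjTranspose_sq, smul_eq_mul, ← sq]
  rfl

theorem exp_I_mul_mul_star_exp_I_mul (x y : ℝ) :
    exp (I * x) * star (exp (I * y)) = exp (I * ↑(x - y)) := by
  rw [Complex.star_def, ← exp_conj, map_mul, conj_I, conj_ofReal, ← exp_add]
  push_cast
  ring_nf

theorem trace_rhoR_mul_rhoR_diagonal_exp {N : ℕ} (θ : Fin N × Fin N → ℝ) :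
    (rhoR N (diagonal fun p => exp (I * θ p)) * rhoR N (diagonal fun p => exp (I * θ p))).trace
      = ((N : ℂ) ^ 2)⁻¹ ^ 2 * ∑ i, ∑ k, ∑ a, ∑ b, exp (I * plaquette θ i k a b) := by
  simp_rw [trace_rhoR_mul_rhoR_diagonal, exp_I_mul_mul_star_exp_I_mul, ← exp_add, plaquette]
  push_cast
  ring_nf

theorem diagonal_unitary_average_purity_general (N : ℕ) :
    (∫ θ : Fin N × Fin N → ℝ,
        Xpur N (Matrix.diagonal fun p => Complex.exp (Complex.I * (θ p : ℂ)))
        ∂(Measure.pi fun _ => uniformPhase))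
      = (2 * (N : ℝ) - 1) / (N : ℝ) ^ 2 := by
  simp_rw [Xpur, trace_rhoR_mul_rhoR_diagonal_exp, ← RCLike.re_to_complex]
  rw [integral_re (integrable_sum_exp_I_mul_plaquette.const_mul _), integral_const_mul,
    integral_sum_exp_I_mul_plaquette, Fintype.card_fin]
  obtain rfl | hN := eq_or_ne N 0
  · simp
  have : ((N : ℂ) ^ 2)⁻¹ ^ 2 * (N * N ^ 2 + N ^ 2 * N - N * N)
      = ((2 * (N : ℝ) - 1) / (N : ℝ) ^ 2 : ℝ) := by
    push_cast
    field_simp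
    ring
  rw [RCLike.re_to_complex, this, ofReal_re]

/-- For a random diagonal unitary on `ℂ^N ⊗ ℂ^N` with independent
uniformly distributed phases, the expectation of the purity `X = tr(ρ_R²)` equals
`(2N-1)/N²`. -/
theorem diagonal_unitary_average_purity (N : ℕ) (hN : 2 ≤ N) :
    (∫ θ : Fin N × Fin N → ℝ,
        Xpur N (Matrix.diagonal fun p => Complex.exp (Complex.I * (θ p : ℂ)))
        ∂(Measure.pi fun _ => uniformPhase))
      = (2 * (N : ℝ) - 1) / (N : ℝ) ^ 2 :=
  diagonal_unitary_average_purity_general N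
end
end
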